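/- arXiv:2411.12848 — 5 statements merged into one kernel-verified Lean document; each statement's English description precedes it below -/
import Mathlib

section
/- Let f : Primes → ℕ be a function. Define μ_f(n) = ∑_{a : a·a^{(f)} ∣ n} μ(a), where a^{(f)} = ∏_{p ∣ a} p^{f(p)·ν_p(a)} and μ is the Möbius function. Then μ_f(n) = 1 if n is f-bounded (i.e. ν_p(n) ≤ f(p) for all primes p) and μ_f(n) = 0 otherwise. -/
open scoped Classical

/-- For `a = ∏ pᵢ^{eᵢ}`, `powF f a = a^{(f)} = ∏ pᵢ^{f(pᵢ)·eᵢ}`. -/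
def powF (f : ℕ → ℕ) (a : ℕ) : ℕ :=
  ∏ p ∈ a.primeFactors, p ^ (f p * a.factorization p)

theorem stmt4 (f : ℕ → ℕ) (n : ℕ) (hn : 0 < n) :
    (∑ a ∈ n.divisors.filter (fun a => a * powF f a ∣ n), ArithmeticFunction.moebius a)
      = if ∀ p : ℕ, p.Prime → n.factorization p ≤ f p then 1 else 0 := by
  have hn0 : n ≠ 0 := hn.ne'
  set S : Finset ℕ := n.primeFactors.filter (fun p => f p < n.factorization p) with hS
  set m : ℕ := ∏ p ∈ S, p with hm
  have hSprime : ∀ p ∈ S, p.Prime := fun p hp =>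
    Nat.prime_of_mem_primeFactors (Finset.mem_filter.mp hp).1
  have hm0 : m ≠ 0 := Finset.prod_ne_zero_iff.mpr fun p hp => (hSprime p hp).ne_zero
  have hmf : m.primeFactors = S := Nat.primeFactors_prod hSprime
  have hmsq : Squarefree m := by
    apply Nat.squarefree_of_factorization_le_one hm0
    intro p
    rw [hm, Nat.factorization_prod (fun q hq => (hSprime q hq).ne_zero),
      Finsupp.finset_sum_apply]
    have hcongr : ∀ q ∈ S, (Nat.factorization q) p = if q = p then 1 else 0 := by
      intro q hq
      rw [(hSprime q hq).factorization]
      simp [Finsupp.single_apply]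
    rw [Finset.sum_congr rfl hcongr, Finset.sum_ite_eq' S p (fun _ => 1)]
    split <;> simp
  have hmdvd : m ∣ n := dvd_trans
    (Finset.prod_dvd_prod_of_subset _ _ _ (Finset.filter_subset _ _))
    (Nat.prod_primeFactors_dvd n)
  -- key: for squarefree a, membership in the filter ↔ a ∣ m
  have key : (n.divisors.filter (fun a => a * powF f a ∣ n)).filter Squarefree
      = m.divisors := by
    ext a
    simp only [Finset.mem_filter, Nat.mem_divisors, hn0, hm0, ne_eq, not_false_eq_true,
      and_true]
    constructor
    · rintro ⟨⟨han, hdvd⟩, hsq⟩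
      have ha0 : a ≠ 0 := hsq.ne_zero
      have hsub : a.primeFactors ⊆ S := by
        intro p hp
        have hpp : p.Prime := Nat.prime_of_mem_primeFactors hp
        have hpa : p ∣ a := Nat.dvd_of_mem_primeFactors hp
        have hfa1 : a.factorization p = 1 :=
          le_antisymm ((Nat.squarefree_iff_factorization_le_one ha0).mp hsq p)
            (hpp.factorization_pos_of_dvd ha0 hpa)
        have hpowdvd : p ^ (f p) ∣ powF f a := by
          have h : p ^ (f p * a.factorization p) ∣ powF f a :=
            Finset.dvd_prod_of_mem (fun q => q ^ (f q * a.factorization q)) hp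
          rwa [hfa1, mul_one] at h
        have hppow : p ^ (f p + 1) ∣ n := by
          rw [pow_succ']
          exact (mul_dvd_mul hpa hpowdvd).trans hdvd
        have hle : f p + 1 ≤ n.factorization p :=
          (Nat.Prime.pow_dvd_iff_le_factorization hpp hn0).mp hppow
        refine Finset.mem_filter.mpr ⟨Nat.mem_primeFactors.mpr ⟨hpp, hpa.trans han, hn0⟩, ?_⟩
        omega
      calc a = ∏ p ∈ a.primeFactors, p := (Nat.prod_primeFactors_of_squarefree hsq).symm
        _ ∣ m := Finset.prod_dvd_prod_of_subset _ _ _ hsub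
    · intro ham
      have hsq : Squarefree a := hmsq.squarefree_of_dvd ham
      have ha0 : a ≠ 0 := hsq.ne_zero
      have han : a ∣ n := ham.trans hmdvd
      refine ⟨⟨han, ?_⟩, hsq⟩
      have hsubS : a.primeFactors ⊆ S := by
        have h := Nat.primeFactors_mono ham hm0
        rwa [hmf] at h
      have hpow0 : powF f a ≠ 0 := Finset.prod_ne_zero_iff.mpr
        fun p hp => pow_ne_zero _ (Nat.prime_of_mem_primeFactors hp).ne_zero
      rw [← Nat.factorization_le_iff_dvd (mul_ne_zero ha0 hpow0) hn0]
      intro p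
      have hfacprod : (powF f a).factorization p
          = if p ∈ a.primeFactors then f p * a.factorization p else 0 := by
        rw [powF, Nat.factorization_prod
          (fun q hq => pow_ne_zero _ (Nat.prime_of_mem_primeFactors hq).ne_zero),
          Finsupp.finset_sum_apply]
        have hcongr : ∀ q ∈ a.primeFactors,
            ((q ^ (f q * a.factorization q)).factorization) p
              = if q = p then f p * a.factorization p else 0 := by
          intro q hq
          rw [Nat.factorization_pow]
          rcases eq_or_ne q p with rfl | hqp
          · simp [(Nat.prime_of_mem_primeFactors hq).factorization]
          · simp [(Nat.prime_of_mem_primeFactors hq).factorization,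
              Finsupp.single_apply, hqp]
        rw [Finset.sum_congr rfl hcongr, Finset.sum_ite_eq' _ p _]
      by_cases hpmem : p ∈ a.primeFactors
      · have hpp : p.Prime := Nat.prime_of_mem_primeFactors hpmem
        have hpa1 : a.factorization p = 1 :=
          le_antisymm ((Nat.squarefree_iff_factorization_le_one ha0).mp hsq p)
            (hpp.factorization_pos_of_dvd ha0 (Nat.dvd_of_mem_primeFactors hpmem))
        have hflt : f p < n.factorization p := (Finset.mem_filter.mp (hsubS hpmem)).2
        rw [Nat.factorization_mul ha0 hpow0, Finsupp.add_apply, hfacprod, if_pos hpmem,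
          hpa1]
        omega
      · have hpa0 : a.factorization p = 0 := by
          rw [← Finsupp.notMem_support_iff, Nat.support_factorization]
          exact hpmem
        rw [Nat.factorization_mul ha0 hpow0, Finsupp.add_apply, hfacprod, if_neg hpmem,
          hpa0]
        simp
  have hfilter :
      (∑ a ∈ n.divisors.filter (fun a => a * powF f a ∣ n), ArithmeticFunction.moebius a)
        = ∑ a ∈ m.divisors, ArithmeticFunction.moebius a := by
    rw [← key]
    symm
    apply Finset.sum_filter_of_ne
    intro a _ hne
    by_contra hns
    exact hne (ArithmeticFunction.moebius_eq_zero_of_not_squarefree hns)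
  have hsum : (∑ a ∈ m.divisors, ArithmeticFunction.moebius a)
      = if m = 1 then 1 else 0 := by
    rw [← ArithmeticFunction.coe_mul_zeta_apply, ArithmeticFunction.moebius_mul_coe_zeta,
      ArithmeticFunction.one_apply]
  have hiff : (m = 1) ↔ (∀ p : ℕ, p.Prime → n.factorization p ≤ f p) := by
    constructor
    · intro h1 p hp
      by_contra hlt
      push_neg at hlt
      have hpn : p ∈ n.primeFactors := Nat.mem_primeFactors.mpr
        ⟨hp, Nat.dvd_of_factorization_pos (by omega), hn0⟩
      have hpS : p ∈ S := Finset.mem_filter.mpr ⟨hpn, hlt⟩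
      have hSe : S = ∅ := by rw [← hmf, h1, Nat.primeFactors_one]
      rw [hSe] at hpS
      simp at hpS
    · intro h
      have hSe : S = ∅ := Finset.filter_eq_empty_iff.mpr
        (fun p hp => not_lt.mpr (h p (Nat.prime_of_mem_primeFactors hp)))
      rw [hm, hSe, Finset.prod_empty]
  rw [hfilter, hsum, if_congr hiff rfl rfl]
end

section
/- Let f : Primes → ℕ be a function whose zero set S = f^{-1}(0) is thin (i.e. ∑_{a ∈ ⟨S⟩} a^{-σ} converges for some σ < 1). Then the infinite product λ_f = ∏_p (1 - 1/((p-1) p^{f(p)})) converges, and if f(2) > 0 then λ_f > 0. -/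
open scoped Classical

/-- `IsSNumber S m` : `m` is a positive integer all of whose prime factors lie in `S`. -/
def IsSNumber (S : Set ℕ) (m : ℕ) : Prop :=
  0 < m ∧ ∀ p : ℕ, p.Prime → p ∣ m → p ∈ S

/-- A set `S` of primes is thin if `∑_{a ∈ ⟨S⟩} a^{-σ}` converges for some `σ < 1`. -/
def IsThin (S : Set ℕ) : Prop :=
  ∃ σ : ℝ, σ < 1 ∧ Summable fun a : ℕ => if IsSNumber S a then (a : ℝ) ^ (-σ) else 0

/-!
Write the factors as `1 - x p` with `x p = 1 / ((p - 1) p ^ f p) ≤ 2 / p ^ (f p + 1)`.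
When `f p = 0` the prime `p` lies in the thin set `S`, so `p⁻¹ ≤ p ^ (-σ)` is a term of the
convergent series defining thinness; otherwise `x p ≤ 2 / p ^ 2`. Hence `∑ x p` converges and
so does the product. If `f 2 > 0`, no factor vanishes (only `p = 2, f 2 = 0` gives `x p = 1`),
and an absolutely convergent product of nonzero factors is nonzero.
-/

lemma IsSNumber.of_prime_mem {S : Set ℕ} {p : ℕ} (hp : p.Prime) (hS : p ∈ S) :
    IsSNumber S p :=
  ⟨hp.pos, fun _ hq hqp => (Nat.prime_dvd_prime_iff_eq hq hp).mp hqp ▸ hS⟩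

lemma IsThin.summable_inv_primes {S : Set ℕ} (hS : IsThin S) :
    Summable fun p : Nat.Primes => if (p : ℕ) ∈ S then ((p : ℕ) : ℝ)⁻¹ else 0 := by
  obtain ⟨σ, hσ, hsum⟩ := hS
  refine .of_nonneg_of_le (fun p => by split_ifs <;> positivity)
    (f := fun p : Nat.Primes => if IsSNumber S p then ((p : ℕ) : ℝ) ^ (-σ) else 0) (fun p => ?_)
    (hsum.comp_injective Nat.Primes.coe_nat_injective)
  split_ifs with hp hSp hSp
  · rw [← Real.rpow_neg_one]
    exact Real.rpow_le_rpow_of_exponent_le (mod_cast p.prop.one_le) (by linarith)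
  · exact absurd (.of_prime_mem p.prop hp) hSp
  · positivity
  · rfl

lemma one_div_sub_one_mul_pow_le {x : ℝ} (hx : 2 ≤ x) (k : ℕ) :
    1 / ((x - 1) * x ^ k) ≤ 2 / x ^ (k + 1) := by
  have hxk : 0 < x ^ k := by positivity
  rw [div_le_div_iff₀ (by nlinarith) (by positivity), pow_succ]
  nlinarith

lemma one_lt_sub_one_mul_pow {x : ℝ} (hx : 2 ≤ x) {k : ℕ} (h : 2 < x ∨ k ≠ 0) :
    1 < (x - 1) * x ^ k := by
  rcases h with hx' | hk
  · nlinarith [one_le_pow₀ (n := k) (by linarith : (1 : ℝ) ≤ x)]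
  · nlinarith [le_self_pow₀ (by linarith : (1 : ℝ) ≤ x) hk]

lemma summable_one_div_sub_one_mul_pow (f : ℕ → ℕ) (hthin : IsThin {p : ℕ | p.Prime ∧ f p = 0}) :
    Summable fun p : Nat.Primes => 1 / ((((p : ℕ) : ℝ) - 1) * ((p : ℕ) : ℝ) ^ f p) := by
  have hsq : Summable fun p : Nat.Primes => (((p : ℕ) : ℝ) ^ 2)⁻¹ :=
    (Real.summable_nat_pow_inv.mpr one_lt_two).comp_injective Nat.Primes.coe_nat_injective
  refine .of_nonneg_of_le (fun p => ?_) (fun p => ?_)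
    ((hthin.summable_inv_primes.add hsq).mul_left 2)
  · have hp : (2 : ℝ) ≤ (p : ℕ) := mod_cast p.prop.two_le
    have : 0 < ((p : ℕ) : ℝ) - 1 := by linarith
    positivity
  · have hp : (2 : ℝ) ≤ (p : ℕ) := mod_cast p.prop.two_le
    refine (one_div_sub_one_mul_pow_le hp (f p)).trans ?_
    by_cases hf : f p = 0
    · rw [if_pos ⟨p.prop, hf⟩, hf, zero_add, pow_one, div_eq_mul_inv]
      have : 0 ≤ (((p : ℕ) : ℝ) ^ 2)⁻¹ := by positivity
      nlinarith
    · have : 2 / ((p : ℕ) : ℝ) ^ (f p + 1) ≤ 2 * (((p : ℕ) : ℝ) ^ 2)⁻¹ := by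
        rw [← div_eq_mul_inv]
        exact div_le_div_of_nonneg_left zero_le_two (by positivity)
          (pow_le_pow_right₀ (by linarith) (by omega))
      refine this.trans (mul_le_mul_of_nonneg_left (le_add_of_nonneg_left ?_) zero_le_two)
      split_ifs <;> positivity

theorem stmt5 (f : ℕ → ℕ) (hthin : IsThin {p : ℕ | p.Prime ∧ f p = 0}) :
    Multipliable (fun p : Nat.Primes =>
      (1 - 1 / ((((p : ℕ) : ℝ) - 1) * ((p : ℕ) : ℝ) ^ (f (p : ℕ))) : ℝ)) ∧
    (0 < f 2 → 0 < ∏' p : Nat.Primes,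
      (1 - 1 / ((((p : ℕ) : ℝ) - 1) * ((p : ℕ) : ℝ) ^ (f (p : ℕ))) : ℝ)) := by
  have hsum := summable_one_div_sub_one_mul_pow f hthin
  refine ⟨by simpa only [sub_eq_add_neg] using Real.multipliable_one_add_of_summable hsum.neg,
    fun hf2 => ?_⟩
  have hfactor : ∀ p : Nat.Primes,
      0 < 1 - 1 / ((((p : ℕ) : ℝ) - 1) * ((p : ℕ) : ℝ) ^ (f (p : ℕ))) := fun p => by
    have hp : (2 : ℝ) ≤ (p : ℕ) := mod_cast p.prop.two_le
    have h : 2 < ((p : ℕ) : ℝ) ∨ f p ≠ 0 := by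
      rcases (p.prop.two_le).lt_or_eq with h | h
      · exact .inl (mod_cast h)
      · exact .inr (h ▸ hf2.ne')
    have hden := one_lt_sub_one_mul_pow hp h
    exact sub_pos.mpr ((div_lt_one (one_pos.trans hden)).mpr hden)
  refine (tprod_nonneg fun p => (hfactor p).le).lt_of_ne' ?_
  simpa only [sub_eq_add_neg] using tprod_one_add_ne_zero_of_summable
    (fun p => by simpa only [← sub_eq_add_neg] using (hfactor p).ne') hsum.neg.norm
end

section
/- For 0 < δ < 1 and real s > 1 − δ, the series ∑_{m=1}^∞ rad(m)^{-δ} m^{-s} converges, and equals the Euler product ∏_p (1 + p^{-δ-s}/(1 − p^{-s})). -/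
/-- `rad n` : the radical of `n`, the product of the distinct primes dividing `n`. -/
def rad (n : ℕ) : ℕ := ∏ p ∈ n.primeFactors, p

/-!
The weight `m ↦ rad(m)^(-δ) m^(-s)` is multiplicative, and at a prime power `p^k` (`k ≥ 1`) it
equals `p^(-δ) (p^(-s))^k`, so its local series is `1` plus a geometric series summing to
`p^(-δ-s) / (1 - p^(-s))`. For a nonnegative multiplicative function every partial sum is bounded
by a finite Euler product `∏ (1 + a_p) ≤ exp (∑ a_p)`; here `a_p ≤ (1 - 2^(-s))⁻¹ p^(-δ-s)` is
summable over primes because `δ + s > 1`. An absolutely convergent series of a multiplicative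
function is the product over primes of its local series.
-/

open Finset

theorem summable_of_nonneg_of_multiplicative {f : ℕ → ℝ} (hf : 0 ≤ f) (hf₀ : f 0 = 0)
    (hf₁ : f 1 = 1) (hmul : ∀ {m n}, m.Coprime n → f (m * n) = f m * f n)
    (hsum : ∀ {p}, p.Prime → Summable fun e ↦ f (p ^ e))
    (hprimes : Summable fun p : Nat.Primes ↦ ∑' e, f (p ^ e) - 1) :
    Summable f := by
  have hfactor : ∀ p : Nat.Primes, 0 ≤ ∑' e, f (p ^ e) - 1 := fun p ↦ by
    simpa only [pow_zero, hf₁, sub_nonneg] using (hsum p.prop).le_tsum 0 fun e _ ↦ hf _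
  refine summable_of_sum_le hf (c := Real.exp (∑' p : Nat.Primes, (∑' e, f (p ^ e) - 1)))
    fun u ↦ ?_
  classical
  set N := u.sup id + 1
  have hsmooth : ∀ m ∈ u, f m ≠ 0 → m ∈ N.smoothNumbers := fun m hm hfm ↦
    Nat.mem_smoothNumbers_of_lt (Nat.pos_of_ne_zero (by rintro rfl; exact hfm hf₀))
      (Nat.lt_succ_of_le (le_sup (f := id) hm))
  obtain ⟨-, hN⟩ := EulerProduct.summable_and_hasSum_smoothNumbers_prod_primesBelow_tsum hf₁ hmul
    (fun hp ↦ (hsum hp).norm) N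
  calc ∑ m ∈ u, f m = ∑ m ∈ u.subtype (· ∈ N.smoothNumbers), f m := by
        rw [sum_subtype_eq_sum_filter, sum_filter_of_ne hsmooth]
    _ ≤ ∏ p ∈ N.primesBelow, ∑' e, f (p ^ e) := sum_le_hasSum _ (fun m _ ↦ hf m) hN
    _ = ∏ p ∈ (range N).subtype Nat.Prime, (1 + (∑' e, f ((p : ℕ) ^ e) - 1)) := by
        simp only [add_sub_cancel]
        exact (prod_subtype_eq_prod_filter (fun p ↦ ∑' e, f (p ^ e))).symm
    _ ≤ Real.exp (∑ p ∈ (range N).subtype Nat.Prime, (∑' e, f ((p : ℕ) ^ e) - 1)) :=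
        Real.prod_one_add_le_exp_sum _ hfactor
    -- `ι` must be given: the index type `{p // p.Prime}` of the finset does not match
    -- `Nat.Primes` at instance transparency.
    _ ≤ _ := Real.exp_le_exp.mpr (hprimes.sum_le_tsum (ι := Nat.Primes) _ fun p _ ↦ hfactor p)

theorem rad_mul_of_coprime {m n : ℕ} (h : m.Coprime n) : rad (m * n) = rad m * rad n := by
  rw [rad, h.primeFactors_mul, prod_union h.disjoint_primeFactors, rad, rad]

theorem rad_prime_pow {p k : ℕ} (hp : p.Prime) (hk : k ≠ 0) : rad (p ^ k) = p := by
  rw [rad, Nat.primeFactors_prime_pow hk hp, prod_singleton]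

noncomputable def radWeight (δ s : ℝ) (m : ℕ) : ℝ := (rad m : ℝ) ^ (-δ) * (m : ℝ) ^ (-s)

section radWeight

variable {δ s : ℝ}

theorem radWeight_nonneg : 0 ≤ radWeight δ s := fun _ ↦ by unfold radWeight; positivity

theorem radWeight_zero (hs : s ≠ 0) : radWeight δ s 0 = 0 := by
  simp [radWeight, Real.zero_rpow (neg_ne_zero.mpr hs)]

theorem radWeight_one : radWeight δ s 1 = 1 := by
  simp [radWeight, rad]

theorem radWeight_mul_of_coprime {m n : ℕ} (h : m.Coprime n) :
    radWeight δ s (m * n) = radWeight δ s m * radWeight δ s n := by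
  simp only [radWeight, rad_mul_of_coprime h, Nat.cast_mul]
  rw [Real.mul_rpow (Nat.cast_nonneg _) (Nat.cast_nonneg _),
    Real.mul_rpow (Nat.cast_nonneg _) (Nat.cast_nonneg _)]
  ring

theorem radWeight_prime_pow {p k : ℕ} (hp : p.Prime) (hk : k ≠ 0) :
    radWeight δ s (p ^ k) = (p : ℝ) ^ (-δ) * ((p : ℝ) ^ (-s)) ^ k := by
  rw [radWeight, rad_prime_pow hp hk, Nat.cast_pow, Real.rpow_pow_comm (Nat.cast_nonneg p)]

theorem hasSum_radWeight_prime_pow {p : ℕ} (hp : p.Prime) (hs : 0 < s) :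
    HasSum (fun e ↦ radWeight δ s (p ^ e)) (1 + (p : ℝ) ^ (-δ - s) / (1 - (p : ℝ) ^ (-s))) := by
  have hp₁ : (1 : ℝ) < p := by exact_mod_cast hp.one_lt
  have hx₁ : (p : ℝ) ^ (-s) < 1 := Real.rpow_lt_one_of_one_lt_of_neg hp₁ (neg_neg_of_pos hs)
  have htail : HasSum (fun e ↦ radWeight δ s (p ^ (e + 1)))
      ((p : ℝ) ^ (-δ - s) / (1 - (p : ℝ) ^ (-s))) := by
    have hgeom : (fun e ↦ radWeight δ s (p ^ (e + 1)))
        = fun e ↦ (p : ℝ) ^ (-δ) * (p : ℝ) ^ (-s) * ((p : ℝ) ^ (-s)) ^ e := funext fun e ↦ by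
      rw [radWeight_prime_pow hp e.succ_ne_zero, pow_succ']; ring
    rw [hgeom, sub_eq_add_neg, Real.rpow_add (by positivity), div_eq_mul_inv]
    exact (hasSum_geometric_of_lt_one (by positivity) hx₁).mul_left _
  simpa only [pow_zero, radWeight_one] using
    HasSum.zero_add (f := fun e ↦ radWeight δ s (p ^ e)) htail

end radWeight

theorem summable_radWeight {δ s : ℝ} (hs : 0 < s) (hδs : 1 < δ + s) :
    Summable (radWeight δ s) := by
  refine summable_of_nonneg_of_multiplicative radWeight_nonneg (radWeight_zero hs.ne')
    radWeight_one radWeight_mul_of_coprime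
    (fun hp ↦ (hasSum_radWeight_prime_pow hp hs).summable) ?_
  have hlocal : ∀ p : Nat.Primes, ∑' e, radWeight δ s ((p : ℕ) ^ e) - 1
      = (p : ℝ) ^ (-δ - s) / (1 - (p : ℝ) ^ (-s)) := fun p ↦ by
    rw [(hasSum_radWeight_prime_pow p.prop hs).tsum_eq, add_sub_cancel_left]
  have h₂ : (2 : ℝ) ^ (-s) < 1 := Real.rpow_lt_one_of_one_lt_of_neg one_lt_two (neg_neg_of_pos hs)
  have hp₂ : ∀ p : Nat.Primes, (p : ℝ) ^ (-s) ≤ (2 : ℝ) ^ (-s) := fun p ↦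
    Real.rpow_le_rpow_of_nonpos two_pos (by exact_mod_cast p.prop.two_le) (neg_nonpos.mpr hs.le)
  simp only [hlocal]
  refine (((Nat.Primes.summable_rpow (r := -δ - s)).mpr (by linarith)).mul_left
    (1 - (2 : ℝ) ^ (-s))⁻¹).of_nonneg_of_le (fun p ↦ ?_) (fun p ↦ ?_)
  · exact div_nonneg (by positivity) (by linarith [hp₂ p])
  · rw [div_eq_inv_mul]
    exact mul_le_mul_of_nonneg_right (inv_anti₀ (by linarith) (by linarith [hp₂ p]))
      (by positivity)

theorem stmt14_general (δ s : ℝ) (h1 : δ < 1) (hs : 1 - δ < s) :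
    Summable (fun m : ℕ => (rad m : ℝ) ^ (-δ) * (m : ℝ) ^ (-s)) ∧
    (∑' m : ℕ, (rad m : ℝ) ^ (-δ) * (m : ℝ) ^ (-s))
      = ∏' p : Nat.Primes,
          (1 + ((p : ℕ) : ℝ) ^ (-δ - s) / (1 - ((p : ℕ) : ℝ) ^ (-s))) := by
  have hs₀ : 0 < s := by linarith
  have hsum : Summable (radWeight δ s) := summable_radWeight hs₀ (by linarith)
  refine ⟨hsum, ?_⟩
  change ∑' m, radWeight δ s m = _
  rw [← EulerProduct.eulerProduct_tprod radWeight_one radWeight_mul_of_coprime hsum.norm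
    (radWeight_zero hs₀.ne')]
  exact tprod_congr fun p ↦ (hasSum_radWeight_prime_pow p.prop hs₀).tsum_eq

theorem stmt14 (δ s : ℝ) (h0 : 0 < δ) (h1 : δ < 1) (hs : 1 - δ < s) :
    Summable (fun m : ℕ => (rad m : ℝ) ^ (-δ) * (m : ℝ) ^ (-s)) ∧
    (∑' m : ℕ, (rad m : ℝ) ^ (-δ) * (m : ℝ) ^ (-s))
      = ∏' p : Nat.Primes,
          (1 + ((p : ℕ) : ℝ) ^ (-δ - s) / (1 - ((p : ℕ) : ℝ) ^ (-s))) :=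
  stmt14_general δ s h1 hs
end

section
/- Fix 0 < δ < 1 and the δ-random model. For positive integers n, m, the expectation of R_n R_m equals ∏_{p∣n, p∤m} p^{1-δ} · ∏_{p∣m, p∤n} p^{1-δ} · ∏_{p ∣ gcd(n,m)} p^{2-δ}(1 − p^{δ-1} + p^{-1}), and this is at most 2 · rad(n)^{1-δ} rad(m)^{1-δ} rad(gcd(n,m))^δ. -/
/-!
`R_n R_m` is a product over the primes `p ∣ nm` of the independent variables
`p ^ k_p · 1[p ∈ S] + 1[p ∉ S]`, where `k_p ∈ {1, 2}` counts how many of `n`, `m` are divisible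
by `p`. Its expectation is therefore the product of `1 + (p ^ k_p - 1) P(p ∈ S)`, which equals
`p ^ (1 - δ)` when `k_p = 1` and `p ^ (2 - δ) (1 - p ^ (δ - 1) + p⁻¹)` when `k_p = 2`.
Since `p⁻¹ ≤ p ^ (δ - 1)`, the latter factor is at most
`p ^ (2 - δ) = p ^ (1 - δ) p ^ (1 - δ) p ^ δ`, and collecting the primes of `n`, of `m` and
of `gcd n m` gives the bound.
-/

open scoped Classical
open MeasureTheory ProbabilityTheory

namespace Finset

variable {ι M : Type*} [CommMonoid M] [DecidableEq ι]

theorem prod_union_eq_prod_sdiff_mul_prod_sdiff_mul_prod_inter (s t : Finset ι) (f : ι → M) :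
    ∏ i ∈ s ∪ t, f i = (∏ i ∈ s \ t, f i) * (∏ i ∈ t \ s, f i) * ∏ i ∈ s ∩ t, f i := by
  rw [union_eq_sdiff_union_sdiff_union_inter, prod_union, prod_union disjoint_sdiff_sdiff]
  rw [disjoint_union_left]
  exact ⟨disjoint_sdiff_inter s t, inter_comm s t ▸ disjoint_sdiff_inter t s⟩

theorem prod_mul_prod_eq_prod_union_pow (s t : Finset ι) (f : ι → M) :
    (∏ i ∈ s, f i) * ∏ i ∈ t, f i
      = ∏ i ∈ s ∪ t, f i ^ ((if i ∈ s then 1 else 0) + (if i ∈ t then 1 else 0)) := by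
  simp only [pow_add, pow_ite, pow_one, pow_zero, prod_mul_distrib, prod_ite_mem,
    union_inter_cancel_left, union_inter_cancel_right]

theorem prod_mul_prod_eq_prod_sdiff_mul_prod_sdiff_mul_prod_inter_sq (s t : Finset ι)
    (f : ι → M) :
    (∏ i ∈ s, f i) * ∏ i ∈ t, f i
      = (∏ i ∈ s \ t, f i) * (∏ i ∈ t \ s, f i) * ∏ i ∈ s ∩ t, f i ^ 2 := by
  rw [← prod_inter_mul_prod_sdiff s t, ← prod_inter_mul_prod_sdiff t s, inter_comm t s,
    prod_pow, sq]
  ac_rfl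

end Finset

section Independence

variable {Ω ι : Type*} [MeasurableSpace Ω] {μ : Measure Ω}

theorem integral_ite_mem [IsProbabilityMeasure μ] {A : Set Ω} (hA : MeasurableSet A) (a b : ℝ) :
    ∫ ω, (if ω ∈ A then a else b) ∂μ = b + (a - b) * μ.real A := by
  change ∫ ω, A.piecewise (fun _ => a) (fun _ => b) ω ∂μ = _
  rw [integral_piecewise hA integrableOn_const integrableOn_const,
    setIntegral_const, setIntegral_const, probReal_compl_eq_one_sub hA, smul_eq_mul, smul_eq_mul]
  ring

theorem ProbabilityTheory.iIndepSet.iIndepFun_ite {A : ι → Set Ω} (hA : iIndepSet A μ)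
    (a b : ι → ℝ) : iIndepFun (fun i ω => if ω ∈ A i then a i else b i) μ := by
  convert hA.iIndepFun_indicator.comp (fun i x => b i + (a i - b i) * x)
    (fun i => by fun_prop) using 2 with i
  ext ω
  by_cases h : ω ∈ A i <;> simp [h]

variable {X : ι → Ω → ℝ}

theorem ProbabilityTheory.iIndepFun.integral_finset_prod (hX : iIndepFun X μ)
    (mX : ∀ i, AEStronglyMeasurable (X i) μ) (s : Finset ι) :
    ∫ ω, ∏ i ∈ s, X i ω ∂μ = ∏ i ∈ s, ∫ ω, X i ω ∂μ := by
  simp_rw [← Finset.prod_coe_sort s]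
  exact (hX.restrict s).integral_fun_prod_eq_prod_integral fun i => mX i

theorem ProbabilityTheory.iIndepFun.integral_prod_mul_prod [DecidableEq ι] (hX : iIndepFun X μ)
    (mX : ∀ i, Measurable (X i)) (s t : Finset ι) :
    ∫ ω, (∏ i ∈ s, X i ω) * ∏ i ∈ t, X i ω ∂μ
      = (∏ i ∈ s \ t, ∫ ω, X i ω ∂μ) * (∏ i ∈ t \ s, ∫ ω, X i ω ∂μ)
        * ∏ i ∈ s ∩ t, ∫ ω, X i ω ^ 2 ∂μ := by
  set k : ι → ℕ := fun i => (if i ∈ s then 1 else 0) + (if i ∈ t then 1 else 0)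
  have hpow : iIndepFun (fun i ω => X i ω ^ k i) μ :=
    hX.comp (fun i x => x ^ k i) fun i => by fun_prop
  simp_rw [Finset.prod_mul_prod_eq_prod_union_pow s t]
  rw [hpow.integral_finset_prod (fun i => ((mX i).pow_const _).aestronglyMeasurable),
    Finset.prod_union_eq_prod_sdiff_mul_prod_sdiff_mul_prod_inter]
  refine congr_arg₂ _ (congr_arg₂ _ ?_ ?_) ?_ <;> refine Finset.prod_congr rfl fun i hi => ?_ <;>
    simp only [Finset.mem_sdiff, Finset.mem_inter] at hi <;> simp [k, hi]

end Independence

section RpowIdentities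

variable {x δ : ℝ}

theorem one_add_sub_one_mul_rpow_sub_one_div (hx : x ≠ 1) :
    1 + (x - 1) * ((x ^ (1 - δ) - 1) / (x - 1)) = x ^ (1 - δ) := by
  field_simp [sub_ne_zero.2 hx]
  ring

theorem one_add_sq_sub_one_mul_rpow_sub_one_div (hx₀ : 0 < x) (hx : x ≠ 1) :
    1 + (x ^ 2 - 1) * ((x ^ (1 - δ) - 1) / (x - 1))
      = x ^ (2 - δ) * (1 - x ^ (δ - 1) + x⁻¹) := by
  have hy : 0 < x ^ (1 - δ) := Real.rpow_pos_of_pos hx₀ _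
  rw [show 2 - δ = 1 + (1 - δ) by ring, Real.rpow_add hx₀, Real.rpow_one,
    show δ - 1 = -(1 - δ) by ring, Real.rpow_neg hx₀.le]
  field_simp [sub_ne_zero.2 hx]
  ring

theorem rpow_two_sub_mul_nonneg (hx : 1 ≤ x) (hδ : δ ≤ 1) :
    0 ≤ x ^ (2 - δ) * (1 - x ^ (δ - 1) + x⁻¹) := by
  have : x ^ (δ - 1) ≤ 1 := Real.rpow_le_one_of_one_le_of_nonpos hx (by linarith)
  have : 0 ≤ x⁻¹ := by positivity
  exact mul_nonneg (Real.rpow_nonneg (by linarith) _) (by linarith)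

theorem rpow_two_sub_mul_le (hx : 1 ≤ x) (hδ : 0 ≤ δ) :
    x ^ (2 - δ) * (1 - x ^ (δ - 1) + x⁻¹) ≤ x ^ (2 - δ) := by
  have : x⁻¹ ≤ x ^ (δ - 1) := by
    rw [← Real.rpow_neg_one]
    exact Real.rpow_le_rpow_of_exponent_le hx (by linarith)
  exact mul_le_of_le_one_right (Real.rpow_nonneg (by linarith) _) (by linarith)

end RpowIdentities

theorem rad_rpow (n : ℕ) (r : ℝ) : (rad n : ℝ) ^ r = ∏ p ∈ n.primeFactors, (p : ℝ) ^ r := by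
  rw [rad, Nat.cast_prod, Real.finsetProd_rpow _ _ fun p _ => Nat.cast_nonneg p]

theorem prod_sdiff_mul_prod_sdiff_mul_prod_primeFactors_gcd_eq_rad {n m : ℕ} (hn : n ≠ 0)
    (hm : m ≠ 0) (δ : ℝ) :
    (∏ p ∈ n.primeFactors \ m.primeFactors, (p : ℝ) ^ (1 - δ))
      * (∏ p ∈ m.primeFactors \ n.primeFactors, (p : ℝ) ^ (1 - δ))
      * (∏ p ∈ (Nat.gcd n m).primeFactors, (p : ℝ) ^ (2 - δ))
      = (rad n : ℝ) ^ (1 - δ) * (rad m : ℝ) ^ (1 - δ) * (rad (Nat.gcd n m) : ℝ) ^ δ := by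
  rw [rad_rpow, rad_rpow, rad_rpow, Nat.primeFactors_gcd hn hm,
    Finset.prod_mul_prod_eq_prod_sdiff_mul_prod_sdiff_mul_prod_inter_sq n.primeFactors,
    mul_assoc _ (∏ p ∈ n.primeFactors ∩ m.primeFactors, ((p : ℝ) ^ (1 - δ)) ^ 2),
    ← Finset.prod_mul_distrib]
  congr 1
  refine Finset.prod_congr rfl fun p hp => ?_
  have hp₀ : (0 : ℝ) < p :=
    Nat.cast_pos.2 (Nat.pos_of_mem_primeFactors (Finset.mem_inter.1 hp).1)
  rw [← Real.rpow_natCast, ← Real.rpow_mul hp₀.le, ← Real.rpow_add hp₀]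
  congr 1
  push_cast
  ring

theorem prod_sdiff_mul_prod_sdiff_mul_prod_primeFactors_gcd_le_rad {n m : ℕ} (hn : n ≠ 0)
    (hm : m ≠ 0) {δ : ℝ} (hδ₀ : 0 ≤ δ) (hδ₁ : δ ≤ 1) :
    (∏ p ∈ n.primeFactors \ m.primeFactors, (p : ℝ) ^ (1 - δ))
      * (∏ p ∈ m.primeFactors \ n.primeFactors, (p : ℝ) ^ (1 - δ))
      * (∏ p ∈ (Nat.gcd n m).primeFactors,
          (p : ℝ) ^ (2 - δ) * (1 - (p : ℝ) ^ (δ - 1) + (p : ℝ)⁻¹))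
      ≤ (rad n : ℝ) ^ (1 - δ) * (rad m : ℝ) ^ (1 - δ) * (rad (Nat.gcd n m) : ℝ) ^ δ := by
  rw [← prod_sdiff_mul_prod_sdiff_mul_prod_primeFactors_gcd_eq_rad hn hm]
  have hone : ∀ p ∈ (Nat.gcd n m).primeFactors, (1 : ℝ) ≤ p := fun p hp =>
    Nat.one_le_cast.2 (Nat.pos_of_mem_primeFactors hp)
  gcongr with p hp
  · exact fun p hp => rpow_two_sub_mul_nonneg (hone p hp) hδ₁
  · exact rpow_two_sub_mul_le (hone p hp) hδ₀

section DeltaModel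

variable {Ω : Type*} [MeasurableSpace Ω]

/-- The `S`-radical `R_n` of `n` at the sample point `ω`, where `S = {p | ω ∈ A p}`. -/
noncomputable def sRadical (A : ℕ → Set Ω) (n : ℕ) (ω : Ω) : ℝ :=
  ∏ p ∈ n.primeFactors, if ω ∈ A p then (p : ℝ) else 1

theorem integral_sRadical_mul_sRadical (μ : Measure Ω) [IsProbabilityMeasure μ]
    {δ : ℝ} (hδ : δ ≤ 1) {A : ℕ → Set Ω} (hmeas : ∀ p, MeasurableSet (A p))
    (hindep : iIndepSet A μ)
    (hprob : ∀ p : ℕ, p.Prime →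
      μ (A p) = ENNReal.ofReal ((((p : ℝ) ^ (1 - δ)) - 1) / ((p : ℝ) - 1)))
    {n m : ℕ} (hn : n ≠ 0) (hm : m ≠ 0) :
    ∫ ω, sRadical A n ω * sRadical A m ω ∂μ
      = (∏ p ∈ n.primeFactors \ m.primeFactors, (p : ℝ) ^ (1 - δ))
        * (∏ p ∈ m.primeFactors \ n.primeFactors, (p : ℝ) ^ (1 - δ))
        * (∏ p ∈ (Nat.gcd n m).primeFactors,
            (p : ℝ) ^ (2 - δ) * (1 - (p : ℝ) ^ (δ - 1) + (p : ℝ)⁻¹)) := by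
  have hμA : ∀ p : ℕ, p.Prime → μ.real (A p) = ((p : ℝ) ^ (1 - δ) - 1) / ((p : ℝ) - 1) := by
    intro p hp
    have hp₁ : (1 : ℝ) < p := by exact_mod_cast hp.one_lt
    rw [measureReal_def, hprob p hp, ENNReal.toReal_ofReal]
    exact div_nonneg (sub_nonneg.2 (Real.one_le_rpow hp₁.le (by linarith))) (by linarith)
  have hmean : ∀ p : ℕ, p.Prime →
      ∫ ω, (if ω ∈ A p then (p : ℝ) else 1) ∂μ = (p : ℝ) ^ (1 - δ) := fun p hp => by
    rw [integral_ite_mem (hmeas p), hμA p hp,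
      one_add_sub_one_mul_rpow_sub_one_div (by exact_mod_cast hp.one_lt.ne')]
  have hsecond : ∀ p : ℕ, p.Prime → ∫ ω, (if ω ∈ A p then (p : ℝ) else 1) ^ 2 ∂μ
      = (p : ℝ) ^ (2 - δ) * (1 - (p : ℝ) ^ (δ - 1) + (p : ℝ)⁻¹) := fun p hp => by
    simp_rw [ite_pow, one_pow]
    rw [integral_ite_mem (hmeas p), hμA p hp, one_add_sq_sub_one_mul_rpow_sub_one_div
      (by exact_mod_cast hp.pos) (by exact_mod_cast hp.one_lt.ne')]
  have hindepFun := hindep.iIndepFun_ite (fun p => (p : ℝ)) fun _ => 1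
  unfold sRadical
  rw [hindepFun.integral_prod_mul_prod
    (fun p => measurable_const.ite (hmeas p) measurable_const), ← Nat.primeFactors_gcd hn hm]
  refine congr_arg₂ _ (congr_arg₂ _ ?_ ?_) ?_ <;> refine Finset.prod_congr rfl fun p hp => ?_
  · exact hmean p (Nat.prime_of_mem_primeFactors (Finset.mem_sdiff.1 hp).1)
  · exact hmean p (Nat.prime_of_mem_primeFactors (Finset.mem_sdiff.1 hp).1)
  · exact hsecond p (Nat.prime_of_mem_primeFactors hp)

end DeltaModel

theorem stmt16 {Ω : Type*} [MeasurableSpace Ω] (μ : Measure Ω) [IsProbabilityMeasure μ]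
    (δ : ℝ) (h0 : 0 < δ) (h1 : δ < 1)
    (A : ℕ → Set Ω) (hmeas : ∀ p, MeasurableSet (A p))
    (hindep : iIndepSet A μ)
    (hprob : ∀ p : ℕ, p.Prime →
      μ (A p) = ENNReal.ofReal ((((p : ℝ) ^ (1 - δ)) - 1) / ((p : ℝ) - 1)))
    (n m : ℕ) (hn : 0 < n) (hm : 0 < m) :
    (∫ ω, (∏ p ∈ n.primeFactors, if ω ∈ A p then (p : ℝ) else 1)
        * (∏ p ∈ m.primeFactors, if ω ∈ A p then (p : ℝ) else 1) ∂μ)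
      = (∏ p ∈ n.primeFactors \ m.primeFactors, (p : ℝ) ^ (1 - δ))
        * (∏ p ∈ m.primeFactors \ n.primeFactors, (p : ℝ) ^ (1 - δ))
        * (∏ p ∈ (Nat.gcd n m).primeFactors,
            (p : ℝ) ^ (2 - δ) * (1 - (p : ℝ) ^ (δ - 1) + (p : ℝ)⁻¹)) ∧
    (∫ ω, (∏ p ∈ n.primeFactors, if ω ∈ A p then (p : ℝ) else 1)
        * (∏ p ∈ m.primeFactors, if ω ∈ A p then (p : ℝ) else 1) ∂μ)
      ≤ 2 * (rad n : ℝ) ^ (1 - δ) * (rad m : ℝ) ^ (1 - δ)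
          * (rad (Nat.gcd n m) : ℝ) ^ δ := by
  have hmoment := integral_sRadical_mul_sRadical μ h1.le hmeas hindep hprob hn.ne' hm.ne'
  refine ⟨hmoment, hmoment ▸ ?_⟩
  calc _ ≤ (rad n : ℝ) ^ (1 - δ) * (rad m : ℝ) ^ (1 - δ) * (rad (Nat.gcd n m) : ℝ) ^ δ :=
        prod_sdiff_mul_prod_sdiff_mul_prod_primeFactors_gcd_le_rad hn.ne' hm.ne' h0.le h1.le
    _ ≤ _ := by
        rw [mul_assoc 2, mul_assoc 2]
        exact le_mul_of_one_le_left (by positivity) one_le_two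
end

section
/- Fix 0 < δ < 1. For primes p₁, p₂ ≤ t, one has ∑_{p₁,p₂ ≤ t} rad(p₁−1)^{1-δ} rad(p₂−1)^{1-δ} rad(gcd(p₁−1, p₂−1))^{δ} (p₁ p₂)^{δ−1} ≤ ∑_{a ≤ t} a^δ π(t,a,1)², where π(t,a,1) is the number of primes p ≤ t with p ≡ 1 mod a. -/
/-- `piArith t a` = number of primes `p ≤ t` with `p ≡ 1 (mod a)`. -/
noncomputable def piArith (t : ℝ) (a : ℕ) : ℕ :=
  ((Finset.range (⌊t⌋₊ + 1)).filter (fun p => p.Prime ∧ a ∣ (p - 1))).card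

/-!
Since `rad (p - 1) ≤ p`, each factor `rad (p - 1) ^ (1 - δ) * p ^ (δ - 1)` is at most `1`, so the
double sum is at most `∑ rad (gcd (p₁ - 1) (p₂ - 1)) ^ δ`. Grouping the pairs `(p₁, p₂)` by the
value `a` of `rad (gcd (p₁ - 1) (p₂ - 1))`, which is a common divisor of `p₁ - 1` and `p₂ - 1`
lying in `[1, t]`, each class is contained in the square of the set of primes `p ≤ t` with
`a ∣ p - 1`, which has `piArith t a` elements.
-/

open Finset

lemma rad_pos (n : ℕ) : 0 < rad n :=
  prod_pos fun _ hp => (Nat.prime_of_mem_primeFactors hp).pos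

lemma rad_dvd (n : ℕ) : rad n ∣ n := Nat.prod_primeFactors_dvd n

lemma rad_le {n : ℕ} (hn : n ≠ 0) : rad n ≤ n := Nat.le_of_dvd (Nat.pos_of_ne_zero hn) (rad_dvd n)

lemma rad_gcd_dvd_left (m n : ℕ) : rad (m.gcd n) ∣ m := (rad_dvd _).trans (Nat.gcd_dvd_left m n)

lemma rad_gcd_dvd_right (m n : ℕ) : rad (m.gcd n) ∣ n := (rad_dvd _).trans (Nat.gcd_dvd_right m n)

lemma Real.rpow_one_sub_mul_rpow_sub_one_le_one {x y δ : ℝ} (hx : 0 ≤ x) (hxy : x ≤ y)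
    (hδ : δ ≤ 1) : x ^ (1 - δ) * y ^ (δ - 1) ≤ 1 := by
  rw [show δ - 1 = -(1 - δ) by ring, Real.rpow_neg (hx.trans hxy), ← div_eq_mul_inv]
  exact div_le_one_of_le₀ (Real.rpow_le_rpow hx hxy (by linarith))
    (Real.rpow_nonneg (hx.trans hxy) _)

lemma rad_sub_one_rpow_mul_rpow_le_one {p : ℕ} (hp : p.Prime) {δ : ℝ} (hδ : δ ≤ 1) :
    (rad (p - 1) : ℝ) ^ (1 - δ) * (p : ℝ) ^ (δ - 1) ≤ 1 := by
  have hle : rad (p - 1) ≤ p := (rad_le (by have := hp.two_le; omega)).trans (Nat.sub_le p 1)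
  exact Real.rpow_one_sub_mul_rpow_sub_one_le_one (Nat.cast_nonneg _) (by exact_mod_cast hle) hδ

lemma summand_le_rad_gcd_rpow {p₁ p₂ : ℕ} (hp₁ : p₁.Prime) (hp₂ : p₂.Prime) {δ : ℝ}
    (hδ : δ ≤ 1) :
    (rad (p₁ - 1) : ℝ) ^ (1 - δ) * (rad (p₂ - 1) : ℝ) ^ (1 - δ)
        * (rad (Nat.gcd (p₁ - 1) (p₂ - 1)) : ℝ) ^ δ * ((p₁ : ℝ) * (p₂ : ℝ)) ^ (δ - 1)
      ≤ (rad (Nat.gcd (p₁ - 1) (p₂ - 1)) : ℝ) ^ δ := by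
  have h₁ := rad_sub_one_rpow_mul_rpow_le_one hp₁ hδ
  have h₂ := rad_sub_one_rpow_mul_rpow_le_one hp₂ hδ
  rw [Real.mul_rpow (Nat.cast_nonneg _) (Nat.cast_nonneg _)]
  calc _ = ((rad (p₁ - 1) : ℝ) ^ (1 - δ) * (p₁ : ℝ) ^ (δ - 1))
          * ((rad (p₂ - 1) : ℝ) ^ (1 - δ) * (p₂ : ℝ) ^ (δ - 1))
          * (rad (Nat.gcd (p₁ - 1) (p₂ - 1)) : ℝ) ^ δ := by ring
    _ ≤ 1 * 1 * (rad (Nat.gcd (p₁ - 1) (p₂ - 1)) : ℝ) ^ δ := by gcongr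
    _ = _ := by rw [one_mul, one_mul]

lemma sum_sum_rad_gcd_le {S : Finset ℕ} {N : ℕ} (hS : ∀ p ∈ S, 2 ≤ p ∧ p ≤ N + 1)
    (w : ℕ → ℝ) (hw : ∀ a, 0 ≤ w a) :
    ∑ p ∈ S, ∑ q ∈ S, w (rad (Nat.gcd (p - 1) (q - 1)))
      ≤ ∑ a ∈ Icc 1 N, w a * (#{p ∈ S | a ∣ p - 1} : ℝ) ^ 2 := by
  set g : ℕ × ℕ → ℕ := fun x => rad (Nat.gcd (x.1 - 1) (x.2 - 1))
  have g_mem_Icc : ∀ x ∈ S ×ˢ S, g x ∈ Icc 1 N := by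
    rintro ⟨p, q⟩ hx
    obtain ⟨hp₂, hpN⟩ := hS p (mem_product.mp hx).1
    have : g (p, q) ≤ p - 1 := Nat.le_of_dvd (by omega) (rad_gcd_dvd_left (p - 1) (q - 1))
    exact mem_Icc.mpr ⟨rad_pos _, by omega⟩
  have fiber_subset (a : ℕ) :
      {x ∈ S ×ˢ S | g x = a} ⊆ {p ∈ S | a ∣ p - 1} ×ˢ {p ∈ S | a ∣ p - 1} := by
    rintro ⟨p, q⟩ hx
    simp only [mem_filter, mem_product] at hx ⊢
    obtain ⟨⟨hp, hq⟩, rfl⟩ := hx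
    exact ⟨⟨hp, rad_gcd_dvd_left _ _⟩, hq, rad_gcd_dvd_right _ _⟩
  rw [← sum_product' (f := fun p q => w (rad (Nat.gcd (p - 1) (q - 1)))),
    ← sum_fiberwise_of_maps_to g_mem_Icc]
  refine sum_le_sum fun a _ => ?_
  rw [sum_congr rfl fun x hx => congrArg w (mem_filter.mp hx).2, sum_const, nsmul_eq_mul,
    mul_comm, sq]
  refine mul_le_mul_of_nonneg_left ?_ (hw a)
  exact_mod_cast (card_le_card (fiber_subset a)).trans_eq (card_product _ _)

lemma piArith_eq_card (t : ℝ) (a : ℕ) :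
    piArith t a = #{p ∈ (range (⌊t⌋₊ + 1)).filter Nat.Prime | a ∣ p - 1} := by
  rw [piArith, filter_filter]

theorem stmt17_general (δ : ℝ) (h1 : δ < 1) (t : ℝ) :
    ∑ p₁ ∈ (Finset.range (⌊t⌋₊ + 1)).filter Nat.Prime,
      ∑ p₂ ∈ (Finset.range (⌊t⌋₊ + 1)).filter Nat.Prime,
        (rad (p₁ - 1) : ℝ) ^ (1 - δ) * (rad (p₂ - 1) : ℝ) ^ (1 - δ)
          * (rad (Nat.gcd (p₁ - 1) (p₂ - 1)) : ℝ) ^ δ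
          * ((p₁ : ℝ) * (p₂ : ℝ)) ^ (δ - 1)
      ≤ ∑ a ∈ Finset.Icc 1 ⌊t⌋₊, (a : ℝ) ^ δ * (piArith t a : ℝ) ^ 2 := by
  have hprimes : ∀ p ∈ (range (⌊t⌋₊ + 1)).filter Nat.Prime, 2 ≤ p ∧ p ≤ ⌊t⌋₊ + 1 := by
    intro p hp
    obtain ⟨hpN, hp⟩ := mem_filter.mp hp
    exact ⟨hp.two_le, (mem_range.mp hpN).le⟩
  calc _ ≤ ∑ p₁ ∈ (range (⌊t⌋₊ + 1)).filter Nat.Prime, ∑ p₂ ∈ (range (⌊t⌋₊ + 1)).filter Nat.Prime,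
          (rad (Nat.gcd (p₁ - 1) (p₂ - 1)) : ℝ) ^ δ :=
        sum_le_sum fun p₁ hp₁ => sum_le_sum fun p₂ hp₂ =>
          summand_le_rad_gcd_rpow (mem_filter.mp hp₁).2 (mem_filter.mp hp₂).2 h1.le
    _ ≤ _ := sum_sum_rad_gcd_le hprimes _ fun a => Real.rpow_nonneg (Nat.cast_nonneg a) δ
    _ = _ := by simp only [piArith_eq_card]

theorem stmt17 (δ : ℝ) (h0 : 0 < δ) (h1 : δ < 1) (t : ℝ) :
    ∑ p₁ ∈ (Finset.range (⌊t⌋₊ + 1)).filter Nat.Prime,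
      ∑ p₂ ∈ (Finset.range (⌊t⌋₊ + 1)).filter Nat.Prime,
        (rad (p₁ - 1) : ℝ) ^ (1 - δ) * (rad (p₂ - 1) : ℝ) ^ (1 - δ)
          * (rad (Nat.gcd (p₁ - 1) (p₂ - 1)) : ℝ) ^ δ
          * ((p₁ : ℝ) * (p₂ : ℝ)) ^ (δ - 1)
      ≤ ∑ a ∈ Finset.Icc 1 ⌊t⌋₊, (a : ℝ) ^ δ * (piArith t a : ℝ) ^ 2 :=
  stmt17_general δ h1 t
end
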